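/- arXiv:1706.02200 — 2 statements merged into one kernel-verified Lean document; each statement's English description precedes it below -/
import Mathlib

section
/- Let a Max-3DM-2 instance with |A| = |B| = |C| = n and a real 0 < ε < 1 be given, and construct the associated scheduling instance. If the Max-3DM-2 instance admits a matching of size k, then the scheduling instance admits a feasible schedule of makespan at most 63n − 3k(1−ε). -/
/-!  Coupled-task scheduling with compatibility constraints. -/

/-- A coupled-task `(a, L, b)`: a first sub-task of processing time `a`,
an idle period of length `L`, then a second sub-task of processing time `b`. -/
structure CTask where
  a : ℝ
  L : ℝ
  b : ℝ

namespace CTask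

/-- The set of time instants occupied by the task when started at time `s`. -/
def occupied (t : CTask) (s : ℝ) : Set ℝ :=
  Set.Ico s (s + t.a) ∪ Set.Ico (s + t.a + t.L) (s + t.a + t.L + t.b)

/-- The idle window of the task when started at time `s`. -/
def idleWindow (t : CTask) (s : ℝ) : Set ℝ :=
  Set.Ico (s + t.a) (s + t.a + t.L)

/-- The span of the task when started at time `s`. -/
def span (t : CTask) (s : ℝ) : Set ℝ :=
  Set.Ico s (s + t.a + t.L + t.b)

/-- Total duration `a + L + b` of a coupled-task. -/
def dur (t : CTask) : ℝ := t.a + t.L + t.b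

/-- All three components of the task are positive. -/
def Positive (t : CTask) : Prop := 0 < t.a ∧ 0 < t.L ∧ 0 < t.b

end CTask

/-- The stretched coupled-task with stretch factor `α`, i.e. `(α, α, α)`. -/
def stretched (α : ℝ) : CTask := ⟨α, α, α⟩

/-- A scheduling instance: a coupled-task for each index, together with a
compatibility relation.  `compat t' t` means that the compatibility graph
contains the arc `(t', t)` (so `t'` may be executed during the idle window of
`t`); an undirected edge `{t, t'}` is modelled by `compat t' t ∧ compat t t'`. -/
structure SchedInstance (ι : Type*) where
  task : ι → CTask
  compat : ι → ι → Prop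

namespace SchedInstance

variable {ι : Type*}

/-- A schedule `σ` (assigning a start time to every task) is feasible if all
start times are nonnegative, occupied intervals of distinct tasks are pairwise
disjoint, and whenever an occupied interval of `t'` meets the idle window of
`t`, the compatibility graph contains the arc (or edge) from `t'` to `t`. -/
def Feasible (I : SchedInstance ι) (σ : ι → ℝ) : Prop :=
  (∀ t, 0 ≤ σ t) ∧
  (∀ t t', t ≠ t' →
    Disjoint ((I.task t).occupied (σ t)) ((I.task t').occupied (σ t'))) ∧
  (∀ t t', t ≠ t' →
    (((I.task t').occupied (σ t')) ∩ ((I.task t).idleWindow (σ t))).Nonempty →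
      I.compat t' t)

/-- Completion time of task `t` under schedule `σ`. -/
def endTime (I : SchedInstance ι) (σ : ι → ℝ) (t : ι) : ℝ :=
  σ t + (I.task t).dur

/-- The makespan of `σ` is at most `C`. -/
def MakespanLE (I : SchedInstance ι) (σ : ι → ℝ) (C : ℝ) : Prop :=
  ∀ t, I.endTime σ t ≤ C

/-- The makespan of `σ` is exactly `C`. -/
def MakespanEq (I : SchedInstance ι) (σ : ι → ℝ) (C : ℝ) : Prop :=
  I.MakespanLE σ C ∧ ∃ t, I.endTime σ t = C

end SchedInstance

/-- An instance of Max-3DM-2: pairwise disjoint finite sets `A`, `B`, `C` of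
equal cardinality and a set `T ⊆ A × B × C` of triples such that every element
of `A ∪ B ∪ C` occurs in exactly two triples of `T`. -/
structure Max3DM2 (U : Type*) [DecidableEq U] where
  A : Finset U
  B : Finset U
  C : Finset U
  T : Finset (U × U × U)
  disjAB : Disjoint A B
  disjAC : Disjoint A C
  disjBC : Disjoint B C
  cardB : B.card = A.card
  cardC : C.card = A.card
  memT : ∀ t ∈ T, t.1 ∈ A ∧ t.2.1 ∈ B ∧ t.2.2 ∈ C
  occ2 : ∀ x ∈ A ∪ B ∪ C,
    (T.filter fun t => t.1 = x ∨ t.2.1 = x ∨ t.2.2 = x).card = 2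

namespace Max3DM2

variable {U : Type*} [DecidableEq U]

/-- Task indices of the associated scheduling instance: an item task for each
element of `A ∪ B ∪ C` (left), an item task `t'ᵢ` for each triple (middle),
and a box task `tᵢ` for each triple (right). -/
abbrev Idx (P : Max3DM2 U) : Type _ :=
  {x // x ∈ P.A ∪ P.B ∪ P.C} ⊕ ({t // t ∈ P.T} ⊕ {t // t ∈ P.T})

/-- The scheduling instance associated with a Max-3DM-2 instance and `ε`:
element items have stretch factor `1`, items `t'ᵢ` have stretch factor `2 + ε`,
boxes have stretch factor `9`; the compatibility graph contains exactly the
arcs `(x, tᵢ)` for each element `x` occurring in the triple `tᵢ`, and the arcs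
`(t'ᵢ, tᵢ)`. -/
def inst (P : Max3DM2 U) (ε : ℝ) : SchedInstance P.Idx where
  task := fun i => match i with
    | .inl _ => stretched 1
    | .inr (.inl _) => stretched (2 + ε)
    | .inr (.inr _) => stretched 9
  compat := fun i j => match i, j with
    | .inl x, .inr (.inr t) =>
        t.val.1 = x.val ∨ t.val.2.1 = x.val ∨ t.val.2.2 = x.val
    | .inr (.inl t'), .inr (.inr t) => t'.val = t.val
    | _, _ => False

/-- A matching: a set of pairwise disjoint triples of `T`. -/
def IsMatching (P : Max3DM2 U) (M : Finset (U × U × U)) : Prop :=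
  M ⊆ P.T ∧ ∀ p ∈ M, ∀ q ∈ M, p ≠ q →
    p.1 ≠ q.1 ∧ p.2.1 ≠ q.2.1 ∧ p.2.2 ≠ q.2.2

end Max3DM2

/-
Lay the tasks out in consecutive blocks. Every triple `t` gets a block of length 27 holding its
box, whose idle window `[9, 18)` has room either for the three elements of `t` (stretch 1 each),
when `t` is in the matching, or for the item `t'` (stretch `2 + ε < 3`) otherwise. The items of
matched triples and the elements left uncovered by the matching get blocks of their own. Tasks
in different blocks have disjoint spans, so feasibility only needs checking inside a box. Since
`|T| ≤ 2n` and the matching covers `3k` elements, the blocks have total length at most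
`27 · 2n + 3(2 + ε)k + 3(3n - 3k) = 63n - 3k(1 - ε)`.
-/

open scoped Finset

namespace CTask

variable (t : CTask) (s : ℝ)

lemma span_eq_Ico_dur : t.span s = Set.Ico s (s + t.dur) := by
  simp only [span, dur, add_assoc]

lemma occupied_subset_span (ha : 0 ≤ t.a) (hL : 0 ≤ t.L) (hb : 0 ≤ t.b) :
    t.occupied s ⊆ t.span s :=
  Set.union_subset (Set.Ico_subset_Ico le_rfl (by linarith))
    (Set.Ico_subset_Ico (by linarith) le_rfl)

lemma idleWindow_subset_span (ha : 0 ≤ t.a) (hb : 0 ≤ t.b) :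
    t.idleWindow s ⊆ t.span s :=
  Set.Ico_subset_Ico (by linarith) (by linarith)

lemma disjoint_occupied_idleWindow : Disjoint (t.occupied s) (t.idleWindow s) :=
  Set.disjoint_union_left.2
    ⟨Set.Ico_disjoint_Ico_same, Set.Ico_disjoint_Ico_same.symm⟩

end CTask

lemma dur_stretched (α : ℝ) : (stretched α).dur = 3 * α := by
  simp only [stretched, CTask.dur]; ring

namespace SchedInstance

variable {ι : Type*} (I : SchedInstance ι) (σ : ι → ℝ)

def NestedIn (j i : ι) : Prop :=
  (I.task j).span (σ j) ⊆ (I.task i).idleWindow (σ i) ∧ I.compat j i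

theorem feasible_of_pairwise
    (hnonneg : ∀ i, 0 ≤ (I.task i).a ∧ 0 ≤ (I.task i).L ∧ 0 ≤ (I.task i).b)
    (hσ : ∀ i, 0 ≤ σ i)
    (hpair : ∀ i j, i ≠ j → Disjoint ((I.task i).span (σ i)) ((I.task j).span (σ j)) ∨
      I.NestedIn σ j i ∨ I.NestedIn σ i j) :
    I.Feasible σ := by
  have hocc i : (I.task i).occupied (σ i) ⊆ (I.task i).span (σ i) :=
    (I.task i).occupied_subset_span _ (hnonneg i).1 (hnonneg i).2.1 (hnonneg i).2.2
  have hidle i : (I.task i).idleWindow (σ i) ⊆ (I.task i).span (σ i) :=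
    (I.task i).idleWindow_subset_span _ (hnonneg i).1 (hnonneg i).2.2
  have hsep i := (I.task i).disjoint_occupied_idleWindow (σ i)
  refine ⟨hσ, fun i j hij => ?_, fun i j hij ⟨y, hyj, hyi⟩ => ?_⟩
  · rcases hpair i j hij with h | ⟨h, -⟩ | ⟨h, -⟩
    · exact h.mono (hocc i) (hocc j)
    · exact (hsep i).symm.mono_left ((hocc j).trans h) |>.symm
    · exact (hsep j).symm.mono_left ((hocc i).trans h)
  · rcases hpair i j hij with h | ⟨-, h⟩ | ⟨h, -⟩
    · exact absurd (hidle i hyi) (Set.disjoint_right.1 h (hocc j hyj))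
    · exact h
    · exact absurd (h (hidle i hyi)) (Set.disjoint_left.1 (hsep j) hyj)

end SchedInstance

section Layout

variable {κ : Type*} [Fintype κ] (len : κ → ℝ)

noncomputable def blockStart (k : κ) : ℝ :=
  ∑ j with Fintype.equivFin κ j < Fintype.equivFin κ k, len j

variable {len}

lemma blockStart_nonneg (hlen : ∀ k, 0 ≤ len k) (k : κ) : 0 ≤ blockStart len k :=
  Finset.sum_nonneg fun j _ => hlen j

lemma blockStart_add_len (k : κ) :
    blockStart len k + len k =
      ∑ j with Fintype.equivFin κ j ≤ Fintype.equivFin κ k, len j := by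
  classical
  have : Finset.univ.filter (fun j => Fintype.equivFin κ j ≤ Fintype.equivFin κ k) =
      insert k (Finset.univ.filter fun j => Fintype.equivFin κ j < Fintype.equivFin κ k) := by
    ext j
    simp [le_iff_lt_or_eq, or_comm]
  rw [this, Finset.sum_insert (by simp), blockStart, add_comm]

lemma blockStart_add_len_le_sum (hlen : ∀ k, 0 ≤ len k) (k : κ) :
    blockStart len k + len k ≤ ∑ j, len j := by
  rw [blockStart_add_len]
  exact Finset.sum_le_sum_of_subset_of_nonneg (Finset.subset_univ _) fun j _ _ => hlen j

lemma blockStart_add_len_le_of_lt (hlen : ∀ k, 0 ≤ len k) {k l : κ}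
    (hkl : Fintype.equivFin κ k < Fintype.equivFin κ l) :
    blockStart len k + len k ≤ blockStart len l := by
  rw [blockStart_add_len]
  refine Finset.sum_le_sum_of_subset_of_nonneg (fun j hj => ?_) fun j _ _ => hlen j
  simp only [Finset.mem_filter, Finset.mem_univ, true_and] at hj ⊢
  exact hj.trans_lt hkl

lemma disjoint_blocks (hlen : ∀ k, 0 ≤ len k) {k l : κ} (hkl : k ≠ l) :
    Disjoint (Set.Ico (blockStart len k) (blockStart len k + len k))
      (Set.Ico (blockStart len l) (blockStart len l + len l)) := by
  have before {k l : κ} (h : Fintype.equivFin κ k < Fintype.equivFin κ l) :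
      Disjoint (Set.Ico (blockStart len k) (blockStart len k + len k))
        (Set.Ico (blockStart len l) (blockStart len l + len l)) :=
    Set.disjoint_left.2 fun y hk hl => by
      linarith [hk.2, hl.1, blockStart_add_len_le_of_lt hlen h]
  rcases lt_or_gt_of_ne ((Fintype.equivFin κ).injective.ne hkl) with h | h
  · exact before h
  · exact (before h).symm

end Layout

section BlockSchedule

variable {ι κ : Type*} [Fintype κ]

noncomputable def blockSchedule (len : κ → ℝ) (place : ι → κ × ℝ) (i : ι) : ℝ :=
  blockStart len (place i).1 + (place i).2

variable {I : SchedInstance ι} {len : κ → ℝ} {place : ι → κ × ℝ}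

lemma span_blockSchedule_subset {i : ι}
    (hfit : 0 ≤ (place i).2 ∧ (place i).2 + (I.task i).dur ≤ len (place i).1) :
    (I.task i).span (blockSchedule len place i) ⊆
      Set.Ico (blockStart len (place i).1) (blockStart len (place i).1 + len (place i).1) := by
  rw [CTask.span_eq_Ico_dur, blockSchedule]
  exact Set.Ico_subset_Ico (by linarith) (by linarith)

lemma disjoint_span_of_block_ne (hlen : ∀ k, 0 ≤ len k)
    (hfit : ∀ i, 0 ≤ (place i).2 ∧ (place i).2 + (I.task i).dur ≤ len (place i).1)
    {i j : ι} (hij : (place i).1 ≠ (place j).1) :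
    Disjoint ((I.task i).span (blockSchedule len place i))
      ((I.task j).span (blockSchedule len place j)) :=
  (disjoint_blocks hlen hij).mono (span_blockSchedule_subset (hfit i))
    (span_blockSchedule_subset (hfit j))

lemma disjoint_span_of_offset_le {i j : ι} (hij : (place i).1 = (place j).1)
    (hoff : (place i).2 + (I.task i).dur ≤ (place j).2) :
    Disjoint ((I.task i).span (blockSchedule len place i))
      ((I.task j).span (blockSchedule len place j)) := by
  rw [CTask.span_eq_Ico_dur, CTask.span_eq_Ico_dur, blockSchedule, blockSchedule, hij]
  exact Set.disjoint_left.2 fun y hi hj => by linarith [hi.2, hj.1]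

lemma blockSchedule_nonneg (hlen : ∀ k, 0 ≤ len k) {i : ι} (hoff : 0 ≤ (place i).2) :
    0 ≤ blockSchedule len place i :=
  add_nonneg (blockStart_nonneg hlen _) hoff

lemma endTime_blockSchedule_le (hlen : ∀ k, 0 ≤ len k) {i : ι}
    (hfit : (place i).2 + (I.task i).dur ≤ len (place i).1) :
    I.endTime (blockSchedule len place) i ≤ ∑ k, len k := by
  have := blockStart_add_len_le_sum hlen (place i).1
  rw [SchedInstance.endTime, blockSchedule]
  linarith

end BlockSchedule

lemma card_filter_not_add_card_le {α β : Type*} {S : Finset β} {M : Finset α} {p : β → Prop}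
    [DecidablePred p] (f : α → β) (hf : Set.InjOn f M) (hS : ∀ t ∈ M, f t ∈ S ∧ p (f t)) :
    #(S.filter fun x => ¬ p x) + #M ≤ #S := by
  classical
  rw [← Finset.card_image_of_injOn hf, ← S.card_filter_add_card_filter_not p, add_comm]
  gcongr
  intro y hy
  obtain ⟨t, ht, rfl⟩ := Finset.mem_image.1 hy
  exact Finset.mem_filter.2 (hS t ht)

namespace Max3DM2

variable {U : Type*} [DecidableEq U] (P : Max3DM2 U)

def Occurs (x : U) (t : U × U × U) : Prop := t.1 = x ∨ t.2.1 = x ∨ t.2.2 = x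

def Covered (M : Finset (U × U × U)) (x : U) : Prop :=
  ∃ t : {t // t ∈ P.T}, t.1 ∈ M ∧ Occurs x t.1

def slot (x : U) (t : U × U × U) : ℝ :=
  if t.1 = x then 0 else if t.2.1 = x then 3 else 6

lemma slot_nonneg (x : U) (t : U × U × U) : 0 ≤ slot x t := by
  unfold slot; split_ifs <;> norm_num

lemma slot_le (x : U) (t : U × U × U) : slot x t ≤ 6 := by
  unfold slot; split_ifs <;> norm_num

lemma slot_separated {x y : U} {t : U × U × U} (hx : Occurs x t) (hy : Occurs y t)
    (hxy : x ≠ y) : slot x t + 3 ≤ slot y t ∨ slot y t + 3 ≤ slot x t := by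
  unfold slot Occurs at *
  split_ifs <;> norm_num <;> grind

variable (ε : ℝ) (M : Finset (U × U × U))

-- Blocks are indexed by the tasks themselves; the block of a task run inside a box is empty.
open Classical in
noncomputable def blockLen : P.Idx → ℝ
  | .inl x => if P.Covered M x.1 then 0 else 3
  | .inr (.inl t) => if t.1 ∈ M then 3 * (2 + ε) else 0
  | .inr (.inr _) => 27

open Classical in
noncomputable def place : P.Idx → P.Idx × ℝ
  | .inl x =>
      if h : P.Covered M x.1 then (.inr (.inr h.choose), 9 + slot x.1 h.choose.1)
      else (.inl x, 0)
  | .inr (.inl t) => if t.1 ∈ M then (.inr (.inl t), 0) else (.inr (.inr t), 9)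
  | .inr (.inr t) => (.inr (.inr t), 0)

noncomputable abbrev schedule : P.Idx → ℝ := blockSchedule (P.blockLen ε M) (P.place M)

variable {P ε M}

lemma place_inl_of_covered {x : {x // x ∈ P.A ∪ P.B ∪ P.C}} (h : P.Covered M x.1) :
    P.place M (.inl x) = (.inr (.inr h.choose), 9 + slot x.1 h.choose.1) := by
  simp [place, h]

lemma place_inl_of_not_covered {x : {x // x ∈ P.A ∪ P.B ∪ P.C}} (h : ¬ P.Covered M x.1) :
    P.place M (.inl x) = (.inl x, 0) := by
  simp [place, h]

lemma place_item_of_mem {t : {t // t ∈ P.T}} (h : t.1 ∈ M) :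
    P.place M (.inr (.inl t)) = (.inr (.inl t), 0) := by
  simp [place, h]

lemma place_item_of_notMem {t : {t // t ∈ P.T}} (h : t.1 ∉ M) :
    P.place M (.inr (.inl t)) = (.inr (.inr t), 9) := by
  simp [place, h]

lemma place_box (t : {t // t ∈ P.T}) : P.place M (.inr (.inr t)) = (.inr (.inr t), 0) := rfl

lemma blockLen_nonneg (hε : 0 ≤ ε) (k : P.Idx) : 0 ≤ P.blockLen ε M k := by
  rcases k with x | t | t <;> simp only [blockLen] <;> (try split_ifs) <;> positivity

lemma inst_task_nonneg (hε : 0 ≤ ε) (i : P.Idx) :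
    0 ≤ ((P.inst ε).task i).a ∧ 0 ≤ ((P.inst ε).task i).L ∧ 0 ≤ ((P.inst ε).task i).b := by
  rcases i with _ | _ | _ <;> simp only [inst, stretched] <;> refine ⟨?_, ?_, ?_⟩ <;> linarith

lemma place_fits (hε : ε ≤ 1) (i : P.Idx) :
    0 ≤ (P.place M i).2 ∧
      (P.place M i).2 + ((P.inst ε).task i).dur ≤ P.blockLen ε M (P.place M i).1 := by
  rcases i with x | t | t
  · by_cases h : P.Covered M x.1
    · rw [place_inl_of_covered h]
      simp only [blockLen, inst, dur_stretched]
      constructor <;> linarith [slot_nonneg x.1 h.choose.1, slot_le x.1 h.choose.1]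
    · rw [place_inl_of_not_covered h]
      simp only [blockLen, inst, dur_stretched, h]
      norm_num
  · by_cases h : t.1 ∈ M
    · rw [place_item_of_mem h]
      simp only [blockLen, inst, dur_stretched, h]
      norm_num
    · rw [place_item_of_notMem h]
      simp only [blockLen, inst, dur_stretched]
      constructor <;> linarith
  · norm_num [place_box, blockLen, inst, dur_stretched]

lemma place_eq_self_or_nested (hε : ε ≤ 1) (i : P.Idx) :
    P.place M i = (i, 0) ∨
      ∃ t, (P.place M i).1 = .inr (.inr t) ∧ i ≠ .inr (.inr t) ∧ 9 ≤ (P.place M i).2 ∧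
        (P.place M i).2 + ((P.inst ε).task i).dur ≤ 18 ∧ (P.inst ε).compat i (.inr (.inr t)) := by
  rcases i with x | t | t
  · by_cases h : P.Covered M x.1
    · refine .inr ⟨h.choose, by rw [place_inl_of_covered h], nofun, ?_⟩
      rw [place_inl_of_covered h]
      simp only [inst, dur_stretched]
      exact ⟨by linarith [slot_nonneg x.1 h.choose.1], by linarith [slot_le x.1 h.choose.1],
        h.choose_spec.2⟩
    · exact .inl (place_inl_of_not_covered h)
  · by_cases h : t.1 ∈ M
    · exact .inl (place_item_of_mem h)
    · refine .inr ⟨t, by rw [place_item_of_notMem h], nofun, ?_⟩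
      rw [place_item_of_notMem h]
      simp only [inst, dur_stretched]
      exact ⟨le_rfl, by linarith, trivial⟩
  · exact .inl (place_box t)

lemma covered_of_place_ne {x : {x // x ∈ P.A ∪ P.B ∪ P.C}}
    (hx : (P.place M (.inl x)).1 ≠ .inl x) : P.Covered M x.1 := by
  by_contra hc
  exact hx (by rw [place_inl_of_not_covered hc])

lemma notMem_of_place_ne {t : {t // t ∈ P.T}}
    (ht : (P.place M (.inr (.inl t))).1 ≠ .inr (.inl t)) : t.1 ∉ M := by
  intro hm
  exact ht (by rw [place_item_of_mem hm])

lemma offsets_separated_of_nested {i j : P.Idx} (hij : i ≠ j) (hi : (P.place M i).1 ≠ i)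
    (hj : (P.place M j).1 ≠ j) (h : (P.place M i).1 = (P.place M j).1) :
    (P.place M i).2 + ((P.inst ε).task i).dur ≤ (P.place M j).2 ∨
      (P.place M j).2 + ((P.inst ε).task j).dur ≤ (P.place M i).2 := by
  rcases i with x | t | t <;> rcases j with y | s | s
  all_goals first
    | exact absurd rfl hi
    | exact absurd rfl hj
    | skip
  · have hx := covered_of_place_ne hi
    have hy := covered_of_place_ne hj
    rw [place_inl_of_covered hx, place_inl_of_covered hy] at h ⊢
    have hc : hx.choose = hy.choose := by simpa using h
    have hxy : x.1 ≠ y.1 := fun e => hij (congrArg _ (Subtype.ext e))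
    have hxc : Occurs x.1 hy.choose.1 := hc ▸ hx.choose_spec.2
    simp only [inst, dur_stretched, hc]
    rcases slot_separated hxc hy.choose_spec.2 hxy with hs | hs
    · exact .inl (by linarith)
    · exact .inr (by linarith)
  · have hx := covered_of_place_ne hi
    rw [place_inl_of_covered hx, place_item_of_notMem (notMem_of_place_ne hj)] at h
    have hc : hx.choose = s := by simpa using h
    exact absurd (hc ▸ hx.choose_spec.1) (notMem_of_place_ne hj)
  · have hy := covered_of_place_ne hj
    rw [place_inl_of_covered hy, place_item_of_notMem (notMem_of_place_ne hi)] at h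
    have hc : hy.choose = t := by simpa using h.symm
    exact absurd (hc ▸ hy.choose_spec.1) (notMem_of_place_ne hi)
  · rw [place_item_of_notMem (notMem_of_place_ne hi),
      place_item_of_notMem (notMem_of_place_ne hj)] at h
    exact absurd (by simpa using h) hij

lemma nestedIn_box {j : P.Idx} {t : {t // t ∈ P.T}} (hj : (P.place M j).1 = .inr (.inr t))
    (h9 : 9 ≤ (P.place M j).2) (h18 : (P.place M j).2 + ((P.inst ε).task j).dur ≤ 18)
    (hc : (P.inst ε).compat j (.inr (.inr t))) :
    (P.inst ε).NestedIn (P.schedule ε M) j (.inr (.inr t)) := by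
  refine ⟨?_, hc⟩
  rw [CTask.span_eq_Ico_dur]
  have hbox : (P.inst ε).task (.inr (.inr t)) = stretched 9 := rfl
  simp only [blockSchedule, hj, place_box, hbox, CTask.idleWindow, stretched]
  exact Set.Ico_subset_Ico (by linarith) (by linarith)

lemma span_disjoint_or_nestedIn (hε0 : 0 ≤ ε) (hε1 : ε ≤ 1) {i j : P.Idx} (hij : i ≠ j) :
    Disjoint (((P.inst ε).task i).span (P.schedule ε M i))
        (((P.inst ε).task j).span (P.schedule ε M j)) ∨
      (P.inst ε).NestedIn (P.schedule ε M) j i ∨ (P.inst ε).NestedIn (P.schedule ε M) i j := by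
  by_cases hb : (P.place M i).1 = (P.place M j).1
  · rcases place_eq_self_or_nested hε1 i with hi | ⟨t, hti, hit, hi9, hi18, hic⟩ <;>
      rcases place_eq_self_or_nested hε1 j with hj | ⟨s, hsj, hjs, hj9, hj18, hjc⟩
    · rw [hi, hj] at hb
      exact absurd hb hij
    · rw [hi, hsj] at hb
      obtain rfl : i = .inr (.inr s) := hb
      exact .inr (.inl (nestedIn_box hsj hj9 hj18 hjc))
    · rw [hj, hti] at hb
      obtain rfl : j = .inr (.inr t) := hb.symm
      exact .inr (.inr (nestedIn_box hti hi9 hi18 hic))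
    · rcases offsets_separated_of_nested hij (hti ▸ hit.symm) (hsj ▸ hjs.symm) hb with h | h
      · exact .inl (disjoint_span_of_offset_le hb h)
      · exact .inl (disjoint_span_of_offset_le hb.symm h).symm
  · exact .inl (disjoint_span_of_block_ne (blockLen_nonneg hε0) (place_fits hε1) hb)

lemma card_T_le : #P.T ≤ 2 * #P.A := by
  calc #P.T = ∑ x ∈ P.A, #(P.T.filter fun t => t.1 = x) :=
        Finset.card_eq_sum_card_fiberwise fun t ht => (P.memT t ht).1
    _ ≤ ∑ _x ∈ P.A, 2 := Finset.sum_le_sum fun x hx =>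
        (Finset.card_le_card (Finset.monotone_filter_right _ fun _ _ h => Or.inl h)).trans
          (P.occ2 x (by simp [hx])).le
    _ = 2 * #P.A := by rw [Finset.sum_const, smul_eq_mul, mul_comm]

variable (P M) in
open Classical in
noncomputable def uncovered : Finset U := (P.A ∪ P.B ∪ P.C).filter fun x => ¬ P.Covered M x

lemma card_uncovered_add_le (hM : P.IsMatching M) : #(P.uncovered M) + 3 * #M ≤ 3 * #P.A := by
  classical
  obtain ⟨hMT, hdisj⟩ := hM
  have inj {f : U × U × U → U} (hf : ∀ p ∈ M, ∀ q ∈ M, p ≠ q → f p ≠ f q) : Set.InjOn f M :=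
    fun p hp q hq h => by_contra fun hne => hf p hp q hq hne h
  have hA := card_filter_not_add_card_le (S := P.A) (p := P.Covered M) Prod.fst
    (inj fun p hp q hq hne => (hdisj p hp q hq hne).1)
    fun t ht => ⟨(P.memT t (hMT ht)).1, ⟨t, hMT ht⟩, ht, .inl rfl⟩
  have hB := card_filter_not_add_card_le (S := P.B) (p := P.Covered M) (·.2.1)
    (inj fun p hp q hq hne => (hdisj p hp q hq hne).2.1)
    fun t ht => ⟨(P.memT t (hMT ht)).2.1, ⟨t, hMT ht⟩, ht, .inr (.inl rfl)⟩
  have hC := card_filter_not_add_card_le (S := P.C) (p := P.Covered M) (·.2.2)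
    (inj fun p hp q hq hne => (hdisj p hp q hq hne).2.2)
    fun t ht => ⟨(P.memT t (hMT ht)).2.2, ⟨t, hMT ht⟩, ht, .inr (.inr rfl)⟩
  have hunion : #(P.uncovered M) ≤
      #(P.A.filter fun x => ¬ P.Covered M x) + #(P.B.filter fun x => ¬ P.Covered M x) +
        #(P.C.filter fun x => ¬ P.Covered M x) := by
    rw [uncovered, Finset.filter_union, Finset.filter_union]
    exact (Finset.card_union_le _ _).trans (by gcongr; exact Finset.card_union_le _ _)
  have := P.cardB
  have := P.cardC
  omega

open Classical in
lemma sum_blockLen (hMT : M ⊆ P.T) :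
    ∑ k, P.blockLen ε M k =
      3 * #(P.uncovered M) + 3 * (2 + ε) * #M + 27 * #P.T := by
  rw [Fintype.sum_sum_type, Fintype.sum_sum_type]
  have hx : ∑ x : {x // x ∈ P.A ∪ P.B ∪ P.C}, P.blockLen ε M (.inl x) =
      ∑ x ∈ P.A ∪ P.B ∪ P.C, if P.Covered M x then 0 else 3 :=
    Finset.sum_coe_sort (P.A ∪ P.B ∪ P.C) fun x => if P.Covered M x then (0 : ℝ) else 3
  have ht : ∑ t : {t // t ∈ P.T}, P.blockLen ε M (.inr (.inl t)) =
      ∑ t ∈ P.T, if t ∈ M then 3 * (2 + ε) else 0 :=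
    Finset.sum_coe_sort P.T fun t => if t ∈ M then 3 * (2 + ε) else 0
  rw [hx, ht, Finset.sum_ite_mem, Finset.inter_eq_right.2 hMT]
  simp only [blockLen, uncovered, Finset.sum_ite, Finset.sum_const,
    Finset.card_attach, Finset.univ_eq_attach, nsmul_eq_mul]
  ring

lemma sum_blockLen_le (hM : P.IsMatching M) :
    ∑ k, P.blockLen ε M k ≤ 63 * (#P.A : ℝ) - 3 * #M * (1 - ε) := by
  have hunc : (#(P.uncovered M) : ℝ) + 3 * #M ≤ 3 * #P.A := by
    exact_mod_cast card_uncovered_add_le hM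
  have hT : (#P.T : ℝ) ≤ 2 * #P.A := by exact_mod_cast card_T_le
  rw [sum_blockLen hM.1]
  linarith

theorem feasible_schedule (hε0 : 0 ≤ ε) (hε1 : ε ≤ 1) : (P.inst ε).Feasible (P.schedule ε M) :=
  (P.inst ε).feasible_of_pairwise _ (inst_task_nonneg hε0)
    (fun i => blockSchedule_nonneg (blockLen_nonneg hε0) (place_fits hε1 i).1)
    fun _ _ hij => span_disjoint_or_nestedIn hε0 hε1 hij

theorem makespanLE_schedule (hε0 : 0 ≤ ε) (hε1 : ε ≤ 1) (hM : P.IsMatching M) :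
    (P.inst ε).MakespanLE (P.schedule ε M) (63 * #P.A - 3 * #M * (1 - ε)) := fun i =>
  (endTime_blockSchedule_le (blockLen_nonneg hε0) (place_fits hε1 i).2).trans
    (sum_blockLen_le hM)

end Max3DM2

/-- if the Max-3DM-2 instance admits a matching of size `k`, then
the associated scheduling instance admits a feasible schedule of makespan at
most `63n − 3k(1 − ε)`. -/
theorem stmt4 {U : Type*} [DecidableEq U] (P : Max3DM2 U)
    (ε : ℝ) (hε0 : 0 < ε) (hε1 : ε < 1)
    (M : Finset (U × U × U)) (hM : P.IsMatching M) (k : ℕ) (hk : M.card = k) :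
    ∃ σ : P.Idx → ℝ, (P.inst ε).Feasible σ ∧
      (P.inst ε).MakespanLE σ (63 * (P.A.card : ℝ) - 3 * (k : ℝ) * (1 - ε)) :=
  ⟨P.schedule ε M, P.feasible_schedule hε0.le hε1.le,
    hk ▸ P.makespanLE_schedule hε0.le hε1.le hM⟩
end

section
/- Let G be an undirected graph whose vertex set is the disjoint union of independent sets A, B, C with |A| = |B| = |C| = q, and construct the associated scheduling instance. If the vertices of G can be partitioned into q sets of size three, each inducing a triangle of G, then the associated scheduling instance admits a feasible schedule of makespan 12(q+1). -/
/-- The three extra tasks `z₀, z₁, z₂` of the Partition-into-Triangles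
reduction. -/
inductive Extra | z0 | z1 | z2

/-- The scheduling instance associated with a graph `G` whose vertex set is
partitioned into independent sets `A`, `B`, `C`: each vertex of `A ∪ B` yields
a stretched task of factor `1`, each vertex of `C` a stretched task of factor
`4`; the extra tasks `z₀, z₁` have factor `1` and `z₂` has factor `4`.  Edges
of `G` inside `A ∪ B` are kept undirected, edges between `A ∪ B` and `C` are
oriented toward `C`; moreover there are the edge `{z₀, z₁}`, the arcs
`(z₀, z₂)` and `(z₁, z₂)`, an edge between `z₀` and every `A`-task and an edge
between `z₁` and every `B`-task. -/
def triInst {V : Type*} [DecidableEq V] (G : SimpleGraph V) (A B C : Finset V) :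
    SchedInstance (V ⊕ Extra) where
  task := fun i => match i with
    | .inl v => if v ∈ C then stretched 4 else stretched 1
    | .inr .z0 => stretched 1
    | .inr .z1 => stretched 1
    | .inr .z2 => stretched 4
  compat := fun i j => match i, j with
    | .inl u, .inl v => G.Adj u v ∧ u ∉ C
    | .inl u, .inr .z0 => u ∈ A
    | .inr .z0, .inl u => u ∈ A
    | .inl u, .inr .z1 => u ∈ B
    | .inr .z1, .inl u => u ∈ B
    | .inr .z0, .inr .z1 => True
    | .inr .z1, .inr .z0 => True
    | .inr .z0, .inr .z2 => True
    | .inr .z1, .inr .z2 => True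
    | _, _ => False

/-- The vertices of `G` can be partitioned into `q` disjoint sets of size
three, each inducing a triangle of `G`. -/
def HasTrianglePartition {V : Type*} [Fintype V] [DecidableEq V] (G : SimpleGraph V) (q : ℕ) : Prop :=
  ∃ Part : Finset (Finset V), Part.card = q ∧
    (∀ S ∈ Part, ∀ S' ∈ Part, S ≠ S' → Disjoint S S') ∧
    Part.biUnion id = Finset.univ ∧
    ∀ S ∈ Part, S.card = 3 ∧ ∀ u ∈ S, ∀ v ∈ S, u ≠ v → G.Adj u v

namespace Stmt7Aux

noncomputable def off : Fin 3 → ℝ := ![0, 4, 5]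
noncomputable def fac : Fin 3 → ℝ := ![4, 1, 1]

lemma mem_occ {α s x : ℝ} :
    x ∈ (stretched α).occupied s ↔ (s ≤ x ∧ x < s + α) ∨ (s + α + α ≤ x ∧ x < s + α + α + α) := by
  simp [CTask.occupied, stretched, Set.mem_Ico]

lemma mem_idle {α s x : ℝ} :
    x ∈ (stretched α).idleWindow s ↔ (s + α ≤ x ∧ x < s + α + α) := by
  simp [CTask.idleWindow, stretched, Set.mem_Ico]

lemma occ_subset (ρ : Fin 3) (T : ℝ) :
    (stretched (fac ρ)).occupied (T + off ρ) ⊆ Set.Ico T (T + 12) := by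
  intro x hx
  fin_cases ρ <;>
    simp only [mem_occ, off, fac, Matrix.cons_val_zero, Matrix.cons_val_one, Matrix.head_cons,
      Fin.isValue, Matrix.cons_val_two, Matrix.tail_cons, Set.mem_Ico] at hx ⊢ <;>
    simp [off, fac] at hx <;>
    (constructor <;> rcases hx with ⟨h1, h2⟩ | ⟨h1, h2⟩ <;> linarith)

lemma idle_subset (ρ : Fin 3) (T : ℝ) :
    (stretched (fac ρ)).idleWindow (T + off ρ) ⊆ Set.Ico T (T + 12) := by
  intro x hx
  fin_cases ρ <;> simp [mem_idle, off, fac, Set.mem_Ico] at hx ⊢ <;>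
    (constructor <;> linarith [hx.1, hx.2])

lemma occ_disj {ρ ρ' : Fin 3} (h : ρ ≠ ρ') (T : ℝ) :
    Disjoint ((stretched (fac ρ)).occupied (T + off ρ))
      ((stretched (fac ρ')).occupied (T + off ρ')) := by
  rw [Set.disjoint_left]
  intro x hx hy
  fin_cases ρ <;> fin_cases ρ' <;>
    first
    | exact h rfl
    | (simp [mem_occ, off, fac] at hx hy
       rcases hx with ⟨h1,h2⟩|⟨h1,h2⟩ <;> rcases hy with ⟨h3,h4⟩|⟨h3,h4⟩ <;> linarith)

lemma occ0_idle {ρ' : Fin 3} (h : ρ' ≠ 0) (T : ℝ) :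
    Disjoint ((stretched (fac 0)).occupied (T + off 0))
      ((stretched (fac ρ')).idleWindow (T + off ρ')) := by
  rw [Set.disjoint_left]
  intro x hx hy
  fin_cases ρ' <;>
    first
    | exact h rfl
    | (simp [mem_occ, mem_idle, off, fac] at hx hy
       rcases hx with ⟨h1,h2⟩|⟨h1,h2⟩ <;> linarith [hy.1, hy.2])

end Stmt7Aux
/-- if the vertices of `G` (whose vertex set is the disjoint
union of independent sets `A`, `B`, `C` with `|A| = |B| = |C| = q`) can be
partitioned into `q` triangles, then the associated scheduling instance admits
a feasible schedule of makespan `12(q + 1)`. -/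
theorem stmt7 {V : Type*} [Fintype V] [DecidableEq V] (G : SimpleGraph V)
    (A B C : Finset V) (q : ℕ)
    (hAB : Disjoint A B) (hAC : Disjoint A C) (hBC : Disjoint B C)
    (hcover : A ∪ B ∪ C = Finset.univ)
    (hcA : A.card = q) (hcB : B.card = q) (hcC : C.card = q)
    (hindA : ∀ u ∈ A, ∀ v ∈ A, ¬ G.Adj u v)
    (hindB : ∀ u ∈ B, ∀ v ∈ B, ¬ G.Adj u v)
    (hindC : ∀ u ∈ C, ∀ v ∈ C, ¬ G.Adj u v)
    (hpart : HasTrianglePartition G q) :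
    ∃ σ : V ⊕ Extra → ℝ, (triInst G A B C).Feasible σ ∧
      (triInst G A B C).MakespanEq σ (12 * ((q : ℝ) + 1)) := by

  classical
  open Stmt7Aux in
  obtain ⟨Part, hPcard, hPdisj, hPcov, hPtri⟩ := hpart
  have hmem : ∀ v : V, ∃ S, S ∈ Part ∧ v ∈ S := by
    intro v
    have hv : v ∈ Part.biUnion id := by rw [hPcov]; exact Finset.mem_univ v
    simpa using Finset.mem_biUnion.mp hv
  choose Tr hTrP hvTr using hmem
  set idx : V → ℕ := fun v => ((Part.equivFin ⟨Tr v, hTrP v⟩ : Fin Part.card) : ℕ) with hidx_def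
  have hidx_lt : ∀ v, idx v < q := fun v => hPcard ▸ (Part.equivFin ⟨Tr v, hTrP v⟩).2
  have hidx_eq : ∀ u v, idx u = idx v → Tr u = Tr v := by
    intro u v h
    have h2 := Part.equivFin.injective (Fin.ext h)
    exact congrArg Subtype.val h2
  have hadj : ∀ u v, u ≠ v → idx u = idx v → G.Adj u v := by
    intro u v hne h
    have hT := hidx_eq u v h
    exact (hPtri _ (hTrP u)).2 u (hvTr u) v (by rw [hT]; exact hvTr v) hne
  set role : V → Fin 3 := fun v => if v ∈ C then (0:Fin 3) else if v ∈ A then 1 else 2 with hrole_def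
  have hB' : ∀ v : V, v ∉ C → v ∉ A → v ∈ B := by
    intro v hC hA
    have hv : v ∈ A ∪ B ∪ C := hcover ▸ Finset.mem_univ v
    simp only [Finset.mem_union] at hv
    tauto
  have hrole_ne : ∀ u v, G.Adj u v → role u ≠ role v := by
    intro u v hadjuv
    by_cases huC : u ∈ C <;> by_cases hvC : v ∈ C <;>
      by_cases huA : u ∈ A <;> by_cases hvA : v ∈ A <;>
      simp only [hrole_def, huC, hvC, huA, hvA, if_true, if_false] <;>
      first
      | decide
      | exact absurd hadjuv (hindC u huC v hvC)
      | exact absurd hadjuv (hindA u huA v hvA)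
      | exact absurd hadjuv (hindB u (hB' u huC huA) v (hB' v hvC hvA))
  set K : V ⊕ Extra → ℕ := Sum.elim idx (fun _ => q) with hK_def
  set eR : Extra → Fin 3 := fun e => match e with | .z0 => 1 | .z1 => 2 | .z2 => 0 with heR_def
  set R : V ⊕ Extra → Fin 3 := Sum.elim role eR with hR_def
  set σ : V ⊕ Extra → ℝ := fun i => 12 * (K i : ℝ) + Stmt7Aux.off (R i) with hσ_def
  have htask : ∀ i, (triInst G A B C).task i = stretched (Stmt7Aux.fac (R i)) := by
    intro i
    rcases i with v | e
    · by_cases hvC : v ∈ C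
      · simp [triInst, hR_def, hrole_def, hvC, Stmt7Aux.fac]
      · by_cases hvA : v ∈ A <;>
          simp [triInst, hR_def, hrole_def, hvC, hvA, Stmt7Aux.fac]
    · cases e <;> simp [triInst, hR_def, heR_def, Stmt7Aux.fac]
  have hKdisj : ∀ i j : V ⊕ Extra, K i ≠ K j →
      Disjoint (Set.Ico (12*(K i:ℝ)) (12*(K i:ℝ) + 12)) (Set.Ico (12*(K j:ℝ)) (12*(K j:ℝ) + 12)) := by
    intro i j hne
    rw [Set.disjoint_left]
    intro x hx hy
    rw [Set.mem_Ico] at hx hy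
    rcases lt_or_gt_of_ne hne with h | h
    · have hc : (K i : ℝ) + 1 ≤ K j := by exact_mod_cast h
      linarith [hx.1, hx.2, hy.1, hy.2]
    · have hc : (K j : ℝ) + 1 ≤ K i := by exact_mod_cast h
      linarith [hx.1, hx.2, hy.1, hy.2]
  have hR_ne : ∀ i j, i ≠ j → K i = K j → R i ≠ R j := by
    intro i j hij hK
    rcases i with u | e <;> rcases j with v | e'
    · have hne : u ≠ v := fun h => hij (by rw [h])
      exact hrole_ne u v (hadj u v hne hK)
    · exfalso; have := hidx_lt u; simp only [hK_def, Sum.elim_inl, Sum.elim_inr] at hK; omega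
    · exfalso; have := hidx_lt v; simp only [hK_def, Sum.elim_inl, Sum.elim_inr] at hK; omega
    · cases e <;> cases e' <;> first | exact absurd rfl hij | simp [hR_def, heR_def] | decide
  refine ⟨σ, ⟨?_, ?_, ?_⟩, ?_, ?_⟩
  · -- nonneg
    intro t
    have h1 : (0:ℝ) ≤ Stmt7Aux.off (R t) := by
      have : ∀ ρ : Fin 3, (0:ℝ) ≤ Stmt7Aux.off ρ := by
        intro ρ; fin_cases ρ <;> norm_num [Stmt7Aux.off]
      exact this _
    have h2 : (0:ℝ) ≤ 12 * (K t : ℝ) := by positivity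
    show (0:ℝ) ≤ 12 * (K t : ℝ) + Stmt7Aux.off (R t)
    linarith
  · -- disjoint occupied
    intro t t' hne
    rw [htask t, htask t']
    have e1 : σ t = 12 * (K t:ℝ) + Stmt7Aux.off (R t) := rfl
    have e2 : σ t' = 12 * (K t':ℝ) + Stmt7Aux.off (R t') := rfl
    by_cases hK : K t = K t'
    · have hRne := hR_ne t t' hne hK
      have hKr : (K t' : ℝ) = K t := by exact_mod_cast hK.symm
      rw [e1, e2, hKr]
      exact Stmt7Aux.occ_disj hRne _
    · rw [e1, e2]
      exact Set.disjoint_of_subset (Stmt7Aux.occ_subset _ _) (Stmt7Aux.occ_subset _ _)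
        (hKdisj t t' hK)
  · -- compat
    intro t t' hne hint
    obtain ⟨x, hx1, hx2⟩ := hint
    have hxo : x ∈ (stretched (Stmt7Aux.fac (R t'))).occupied (12*(K t':ℝ) + Stmt7Aux.off (R t')) := by
      rw [← htask t']; exact hx1
    have hxi : x ∈ (stretched (Stmt7Aux.fac (R t))).idleWindow (12*(K t:ℝ) + Stmt7Aux.off (R t)) := by
      rw [← htask t]; exact hx2
    by_cases hK : K t = K t'
    · -- same block
      have hKr : (K t' : ℝ) = K t := by exact_mod_cast hK.symm
      rw [hKr] at hxo
      have hRne := hR_ne t t' hne hK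
      have hRt'0 : R t' ≠ 0 := by
        intro h0
        have hRt0 : R t ≠ 0 := fun h => hRne (h.trans h0.symm)
        rw [h0] at hxo
        exact Set.disjoint_left.mp (Stmt7Aux.occ0_idle hRt0 _) hxo hxi
      rcases t with u | e <;> rcases t' with v | e'
      · -- both vertices
        have hvu : v ≠ u := fun h => hne (by rw [h])
        have hAdj : G.Adj v u := hadj v u hvu hK.symm
        have hvC : v ∉ C := by
          intro hvC
          exact hRt'0 (by simp [hR_def, hrole_def, hvC])
        exact ⟨hAdj, hvC⟩
      · exfalso; have := hidx_lt u; simp only [hK_def, Sum.elim_inl, Sum.elim_inr] at hK; omega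
      · exfalso; have := hidx_lt v; simp only [hK_def, Sum.elim_inl, Sum.elim_inr] at hK; omega
      · cases e <;> cases e' <;>
          first
          | exact absurd rfl hne
          | exact absurd rfl hRt'0
          | trivial
    · -- different blocks: impossible
      exfalso
      have h1 := Stmt7Aux.occ_subset (R t') (12*(K t':ℝ)) hxo
      have h2 := Stmt7Aux.idle_subset (R t) (12*(K t:ℝ)) hxi
      exact Set.disjoint_left.mp (hKdisj t' t (fun h => hK h.symm)) h1 h2
  · -- makespan LE
    intro t
    have hdur : ((triInst G A B C).task t).dur = 3 * Stmt7Aux.fac (R t) := by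
      rw [htask t]; simp [CTask.dur, stretched]; ring
    have hof : Stmt7Aux.off (R t) + 3 * Stmt7Aux.fac (R t) ≤ 12 := by
      have : ∀ ρ : Fin 3, Stmt7Aux.off ρ + 3 * Stmt7Aux.fac ρ ≤ 12 := by
        intro ρ; fin_cases ρ <;> norm_num [Stmt7Aux.off, Stmt7Aux.fac]
      exact this _
    have hKle : (K t : ℝ) ≤ q := by
      rcases t with v | e
      · have := hidx_lt v
        simp only [hK_def, Sum.elim_inl]
        exact_mod_cast this.le
      · simp [hK_def]
    show σ t + ((triInst G A B C).task t).dur ≤ 12 * ((q:ℝ) + 1)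
    rw [hdur]
    have e1 : σ t = 12 * (K t:ℝ) + Stmt7Aux.off (R t) := rfl
    rw [e1]
    linarith
  · -- exact makespan witness
    refine ⟨Sum.inr .z2, ?_⟩
    show σ (.inr .z2) + ((triInst G A B C).task (.inr .z2)).dur = 12 * ((q:ℝ) + 1)
    rw [htask]
    have hR2 : R (.inr .z2) = 0 := by simp [hR_def, heR_def]
    rw [hR2]
    have hK2 : K (.inr .z2) = q := by simp [hK_def]
    simp only [hσ_def, hK2, hR2]
    norm_num [Stmt7Aux.off, Stmt7Aux.fac, CTask.dur, stretched]
    ring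
end
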